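/- arXiv:2403.05080 — 3 statements merged into one kernel-verified Lean document; each statement's English description precedes it below -/
import Mathlib

section
/- Let d, r ≥ 1. Let F : ℝ^d × ℝ^r → [0,∞) be measurable with M := ∫∫ F(θ,s₁) dθ ds₁ ∈ (0,∞) (the section of a joint density at a fixed observed summary s_o). Let p : ℝ^d × ℝ^r → [0,∞) be measurable such that p(θ,·) is a probability density on ℝ^r for every θ. Define E(θ) := ∫ p(θ,s₁) log F(θ,s₁) ds₁ and H(θ) := −∫ p(θ,s₁) log p(θ,s₁) ds₁ (assumed finite for every θ), set g(θ) := exp(E(θ) + H(θ)) and Z := ∫ g(θ) dθ, assumed to lie in (0,∞). Let q' : ℝ^d → [0,∞) be a probability density such that F(θ,s₁) > 0 for a.e. (θ,s₁) with q'(θ)p(θ,s₁) > 0, the function (θ,s₁) ↦ q'(θ)p(θ,s₁) log( q'(θ)p(θ,s₁)M / F(θ,s₁) ) is Lebesgue integrable, q'·log(q'Z/g) is integrable, and q'·E and q'·H are integrable. Then D_KL( q'(θ)p(θ,s₁) ‖ F(θ,s₁)/M ) = D_KL( q' ‖ g/Z ) + log M − log Z. -/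
open MeasureTheory

/-- For a joint-density section `F` on `ℝ^d × ℝ^r` with mass `M`, a conditional family
`p(θ,·)` of probability densities, `E(θ)` the expected log of `F`, `H(θ)` the differential
entropy of `p(θ,·)`, `g = exp(E + H)` with mass `Z`, and a probability density `q'` on `ℝ^d`:
`D_KL(q'(θ)p(θ,s₁) ‖ F/M) = D_KL(q' ‖ g/Z) + log M − log Z`. -/
theorem kl_decomposition_information_projection (d r : ℕ) (hd : 1 ≤ d) (hr : 1 ≤ r)
    (F : (Fin d → ℝ) × (Fin r → ℝ) → ℝ)
    (hF_meas : Measurable F) (hF_nonneg : ∀ x, 0 ≤ F x)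
    (hF_int : Integrable F) (hM_pos : 0 < ∫ x, F x)
    (p : (Fin d → ℝ) → (Fin r → ℝ) → ℝ)
    (hp_meas : Measurable (Function.uncurry p))
    (hp_nonneg : ∀ θ s, 0 ≤ p θ s)
    (hp_int : ∀ θ, Integrable (p θ))
    (hp_one : ∀ θ, ∫ s, p θ s = 1)
    (E H : (Fin d → ℝ) → ℝ)
    (hE_int : ∀ θ, Integrable (fun s => p θ s * Real.log (F (θ, s))))
    (hE : ∀ θ, E θ = ∫ s, p θ s * Real.log (F (θ, s)))
    (hH_int : ∀ θ, Integrable (fun s => p θ s * Real.log (p θ s)))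
    (hH : ∀ θ, H θ = -∫ s, p θ s * Real.log (p θ s))
    (hg_int : Integrable (fun θ => Real.exp (E θ + H θ)))
    (hZ_pos : 0 < ∫ θ, Real.exp (E θ + H θ))
    (q' : (Fin d → ℝ) → ℝ)
    (hq_meas : Measurable q') (hq_nonneg : ∀ θ, 0 ≤ q' θ)
    (hq_int : Integrable q') (hq_one : ∫ θ, q' θ = 1)
    (hpos : ∀ᵐ x : (Fin d → ℝ) × (Fin r → ℝ), 0 < q' x.1 * p x.1 x.2 → 0 < F x)
    (hint1 : Integrable (fun x : (Fin d → ℝ) × (Fin r → ℝ) =>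
      q' x.1 * p x.1 x.2 * Real.log (q' x.1 * p x.1 x.2 * (∫ y, F y) / F x)))
    (hint2 : Integrable (fun θ => q' θ *
      Real.log (q' θ * (∫ t, Real.exp (E t + H t)) / Real.exp (E θ + H θ))))
    (hint3 : Integrable (fun θ => q' θ * E θ))
    (hint4 : Integrable (fun θ => q' θ * H θ)) :
    (∫ x : (Fin d → ℝ) × (Fin r → ℝ),
        q' x.1 * p x.1 x.2 * Real.log (q' x.1 * p x.1 x.2 / (F x / (∫ y, F y))))
      = (∫ θ, q' θ * Real.log (q' θ /
            (Real.exp (E θ + H θ) / (∫ t, Real.exp (E t + H t)))))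
        + Real.log (∫ x, F x) - Real.log (∫ θ, Real.exp (E θ + H θ)) := by
  have hdd : ∀ a b c : ℝ, a / (b / c) = a * c / b := fun a b c => div_div_eq_mul_div a b c
  simp only [hdd]
  set M := ∫ x, F x with hMdef
  set Z := ∫ θ, Real.exp (E θ + H θ) with hZdef
  rw [Measure.volume_eq_prod] at hint1 hpos
  rw [show ((volume : Measure ((Fin d → ℝ) × (Fin r → ℝ)))) = (volume : Measure (Fin d → ℝ)).prod volume from Measure.volume_eq_prod _ _]
  rw [MeasureTheory.integral_prod _ hint1]
  have hsec : ∀ᵐ θ : (Fin d → ℝ), ∀ᵐ s : (Fin r → ℝ), 0 < q' θ * p θ s → 0 < F (θ, s) :=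
    Measure.ae_ae_of_ae_prod hpos
  have key : ∀ᵐ θ : (Fin d → ℝ),
      (∫ s, q' θ * p θ s * Real.log (q' θ * p θ s * M / F (θ, s)))
        = q' θ * Real.log (q' θ * Z / Real.exp (E θ + H θ))
          + q' θ * (Real.log M - Real.log Z) := by
    filter_upwards [hsec] with θ hθ
    rcases eq_or_lt_of_le (hq_nonneg θ) with h0 | hq
    · simp [← h0]
    · have hpt : ∀ᵐ s : (Fin r → ℝ),
          q' θ * p θ s * Real.log (q' θ * p θ s * M / F (θ, s))
            = q' θ * (p θ s * Real.log (p θ s))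
              + (q' θ * (Real.log (q' θ) + Real.log M)) * p θ s
              - q' θ * (p θ s * Real.log (F (θ, s))) := by
        filter_upwards [hθ] with s hs
        rcases eq_or_lt_of_le (hp_nonneg θ s) with h0p | hp
        · simp [← h0p]
        · have hFpos : 0 < F (θ, s) := hs (mul_pos hq hp)
          rw [Real.log_div (by positivity) hFpos.ne',
            Real.log_mul (by positivity) hM_pos.ne',
            Real.log_mul hq.ne' hp.ne']
          ring
      have i1 : Integrable (fun s : Fin r → ℝ => q' θ * (p θ s * Real.log (p θ s))) :=
        (hH_int θ).const_mul _
      have i2 : Integrable (fun s : Fin r → ℝ =>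
          (q' θ * (Real.log (q' θ) + Real.log M)) * p θ s) := (hp_int θ).const_mul _
      have i3 : Integrable (fun s : Fin r → ℝ => q' θ * (p θ s * Real.log (F (θ, s)))) :=
        (hE_int θ).const_mul _
      have i12 : Integrable (fun s : Fin r → ℝ => q' θ * (p θ s * Real.log (p θ s))
          + (q' θ * (Real.log (q' θ) + Real.log M)) * p θ s) := i1.add i2
      rw [integral_congr_ae hpt, integral_sub i12 i3, integral_add i1 i2,
        integral_const_mul, integral_const_mul, integral_const_mul, hp_one θ,
        Real.log_div (by positivity) (Real.exp_ne_zero _),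
        Real.log_mul hq.ne' hZ_pos.ne', Real.log_exp, hE θ, hH θ]
      ring
  rw [integral_congr_ae key,
    integral_add hint2 (hq_int.mul_const _), integral_mul_const, hq_one]
  ring
end

section
/- Let d, r ≥ 1. Let F : ℝ^d × ℝ^r → [0,∞) be measurable with M := ∫∫ F(θ,s₁) dθ ds₁ ∈ (0,∞). Let p : ℝ^d × ℝ^r → [0,∞) be measurable such that p(θ,·) is a probability density on ℝ^r for every θ. Define E(θ) := ∫ p(θ,s₁) log F(θ,s₁) ds₁ and H(θ) := −∫ p(θ,s₁) log p(θ,s₁) ds₁ (assumed finite for every θ), g(θ) := exp(E(θ)+H(θ)), Z := ∫ g(θ) dθ ∈ (0,∞), and f'(θ) := g(θ)/Z. Then for every probability density q' on ℝ^d satisfying the positivity and integrability conditions making both divergences below well defined (F > 0 a.e. on {q'·p > 0}, q'·p·log(q'pM/F) integrable, q'·log(q'Z/g) integrable, q'·E and q'·H integrable), one has D_KL( q'(θ)p(θ,s₁) ‖ F/M ) ≥ log M − log Z, with equality if and only if q' = f' Lebesgue-almost everywhere. Consequently, q*(θ,s₁) := f'(θ)p(θ,s₁) is the (a.e.-unique)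 minimizer of q ↦ D_KL(q ‖ F/M) over the class Q' = { q'(θ)p(θ,s₁) : q' a probability density on ℝ^d }: the information projection of the conditional density F/M onto Q' is f'(θ)·p(θ,s₁). -/
open MeasureTheory

lemma gibbs_pointwise (x y : ℝ) (hx : 0 ≤ x) (hy : 0 < y) :
    x - y ≤ x * Real.log (x / y) ∧ (x * Real.log (x / y) = x - y ↔ x = y) := by
  rcases hx.lt_or_eq with hx | hx
  · have hyx : 0 < y / x := div_pos hy hx
    have h1 : Real.log (y / x) ≤ y / x - 1 := Real.log_le_sub_one_of_pos hyx
    have hlogeq : Real.log (x / y) = - Real.log (y / x) := by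
      rw [← Real.log_inv, inv_div]
    have h4 : x * (y / x) = y := by field_simp
    have h5 : x * (y / x - 1) = y - x := by rw [mul_sub, h4]; ring
    have h3 : x * Real.log (y / x) ≤ y - x := by
      calc x * Real.log (y / x) ≤ x * (y / x - 1) := mul_le_mul_of_nonneg_left h1 hx.le
        _ = y - x := h5
    have key : x - y ≤ x * Real.log (x / y) := by
      rw [hlogeq, mul_neg]; linarith
    refine ⟨key, ?_, ?_⟩
    · intro heq
      by_contra hne
      have hne1 : y / x ≠ 1 := by
        intro h
        have : y = x := by field_simp at h; linarith
        exact hne this.symm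
      have h2 : Real.log (y / x) < y / x - 1 := Real.log_lt_sub_one_of_pos hyx hne1
      have h3' : x * Real.log (y / x) < y - x := by
        calc x * Real.log (y / x) < x * (y / x - 1) := by
              exact (mul_lt_mul_iff_right₀ hx).2 h2
          _ = y - x := h5
      rw [hlogeq, mul_neg] at heq; linarith
    · intro heq; rw [heq, div_self hy.ne', Real.log_one, mul_zero]; linarith
  · refine ⟨?_, ?_⟩
    · rw [← hx, zero_mul]; linarith
    · rw [← hx, zero_mul]
      constructor
      · intro h; exfalso; linarith
      · intro h; exfalso; linarith

/-- ELBO bound and information projection: with `g = exp(E+H)`, `Z = ∫ g`, `f' = g/Z`, for any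
probability density `q'` satisfying the positivity and integrability conditions,
`D_KL(q'(θ)p(θ,s₁) ‖ F/M) ≥ log M − log Z`, with equality iff `q' = f'` a.e.; hence
`q*(θ,s₁) = f'(θ)p(θ,s₁)` is the a.e.-unique minimizer of `q ↦ D_KL(q ‖ F/M)` over the class
`{q'(θ)p(θ,s₁) : q'  a probability density}`. -/
theorem information_projection_optimality (d r : ℕ) (hd : 1 ≤ d) (hr : 1 ≤ r)
    (F : (Fin d → ℝ) × (Fin r → ℝ) → ℝ)
    (hF_meas : Measurable F) (hF_nonneg : ∀ x, 0 ≤ F x)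
    (hF_int : Integrable F) (hM_pos : 0 < ∫ x, F x)
    (p : (Fin d → ℝ) → (Fin r → ℝ) → ℝ)
    (hp_meas : Measurable (Function.uncurry p))
    (hp_nonneg : ∀ θ s, 0 ≤ p θ s)
    (hp_int : ∀ θ, Integrable (p θ))
    (hp_one : ∀ θ, ∫ s, p θ s = 1)
    (E H : (Fin d → ℝ) → ℝ)
    (hE_int : ∀ θ, Integrable (fun s => p θ s * Real.log (F (θ, s))))
    (hE : ∀ θ, E θ = ∫ s, p θ s * Real.log (F (θ, s)))
    (hH_int : ∀ θ, Integrable (fun s => p θ s * Real.log (p θ s)))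
    (hH : ∀ θ, H θ = -∫ s, p θ s * Real.log (p θ s))
    (hg_int : Integrable (fun θ => Real.exp (E θ + H θ)))
    (hZ_pos : 0 < ∫ θ, Real.exp (E θ + H θ))
    (q' : (Fin d → ℝ) → ℝ)
    (hq_meas : Measurable q') (hq_nonneg : ∀ θ, 0 ≤ q' θ)
    (hq_int : Integrable q') (hq_one : ∫ θ, q' θ = 1)
    (hpos : ∀ᵐ x : (Fin d → ℝ) × (Fin r → ℝ), 0 < q' x.1 * p x.1 x.2 → 0 < F x)
    (hint1 : Integrable (fun x : (Fin d → ℝ) × (Fin r → ℝ) =>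
      q' x.1 * p x.1 x.2 * Real.log (q' x.1 * p x.1 x.2 * (∫ y, F y) / F x)))
    (hint2 : Integrable (fun θ => q' θ *
      Real.log (q' θ * (∫ t, Real.exp (E t + H t)) / Real.exp (E θ + H θ))))
    (hint3 : Integrable (fun θ => q' θ * E θ))
    (hint4 : Integrable (fun θ => q' θ * H θ)) :
    (Real.log (∫ x, F x) - Real.log (∫ θ, Real.exp (E θ + H θ))
        ≤ ∫ x : (Fin d → ℝ) × (Fin r → ℝ),
            q' x.1 * p x.1 x.2 * Real.log (q' x.1 * p x.1 x.2 / (F x / (∫ y, F y))))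
    ∧ ((∫ x : (Fin d → ℝ) × (Fin r → ℝ),
            q' x.1 * p x.1 x.2 * Real.log (q' x.1 * p x.1 x.2 / (F x / (∫ y, F y))))
          = Real.log (∫ x, F x) - Real.log (∫ θ, Real.exp (E θ + H θ))
        ↔ q' =ᵐ[volume]
            fun θ => Real.exp (E θ + H θ) / (∫ t, Real.exp (E t + H t))) := by
  classical
  set M := ∫ x, F x with hMdef
  set Z := ∫ θ, Real.exp (E θ + H θ) with hZdef
  -- measurability of E and H
  have hpF_meas : StronglyMeasurable
      fun x : (Fin d → ℝ) × (Fin r → ℝ) => p x.1 x.2 * Real.log (F x) :=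
    (hp_meas.mul (Real.measurable_log.comp hF_meas)).stronglyMeasurable
  have hE_meas : Measurable E := by
    have h1 : Measurable fun θ => ∫ s, p θ s * Real.log (F (θ, s)) :=
      hpF_meas.integral_prod_right'.measurable
    have : E = fun θ => ∫ s, p θ s * Real.log (F (θ, s)) := funext hE
    rw [this]; exact h1
  have hpp_meas : StronglyMeasurable
      fun x : (Fin d → ℝ) × (Fin r → ℝ) => p x.1 x.2 * Real.log (p x.1 x.2) :=
    (hp_meas.mul (Real.measurable_log.comp hp_meas)).stronglyMeasurable
  have hH_meas : Measurable H := by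
    have h1 : Measurable fun θ => ∫ s, p θ s * Real.log (p θ s) :=
      hpp_meas.integral_prod_right'.measurable
    have : H = fun θ => -∫ s, p θ s * Real.log (p θ s) := funext hH
    rw [this]; exact h1.neg
  have hφ_meas : Measurable fun θ => q' θ * Real.log (q' θ * Z / Real.exp (E θ + H θ)) :=
    hq_meas.mul (Real.measurable_log.comp
      ((hq_meas.mul_const Z).div (Real.measurable_exp.comp (hE_meas.add hH_meas))))
  -- B is integrable on the product
  have hB_meas : Measurable fun x : (Fin d → ℝ) × (Fin r → ℝ) =>
      (q' x.1 * Real.log (q' x.1 * Z / Real.exp (E x.1 + H x.1))) * p x.1 x.2 :=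
    (hφ_meas.comp measurable_fst).mul hp_meas
  have hB_int : Integrable (fun x : (Fin d → ℝ) × (Fin r → ℝ) =>
      (q' x.1 * Real.log (q' x.1 * Z / Real.exp (E x.1 + H x.1))) * p x.1 x.2) := by
    rw [Measure.volume_eq_prod]
    rw [integrable_prod_iff hB_meas.aestronglyMeasurable]
    constructor
    · refine Filter.Eventually.of_forall fun θ => ?_
      have h := (hp_int θ).const_mul (q' θ * Real.log (q' θ * Z / Real.exp (E θ + H θ)))
      exact h
    · have heq : (fun θ => ∫ s, ‖(q' θ * Real.log (q' θ * Z / Real.exp (E θ + H θ))) * p θ s‖)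
          = fun θ => ‖q' θ * Real.log (q' θ * Z / Real.exp (E θ + H θ))‖ := by
        funext θ
        simp_rw [norm_mul]
        rw [integral_const_mul]
        have : ∀ s, ‖p θ s‖ = p θ s := fun s => Real.norm_of_nonneg (hp_nonneg θ s)
        simp_rw [this]
        rw [hp_one θ, mul_one]
      rw [heq]
      exact hint2.norm
  -- abbreviations
  have hA_int : Integrable (fun x : (Fin d → ℝ) × (Fin r → ℝ) =>
      q' x.1 * p x.1 x.2 * Real.log (q' x.1 * p x.1 x.2 * M / F x)) := hint1
  -- decomposition a.e.
  have hdecomp : ∀ᵐ x : (Fin d → ℝ) × (Fin r → ℝ),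
      q' x.1 * p x.1 x.2 * Real.log (q' x.1 * p x.1 x.2 * M / F x)
      = (q' x.1 * Real.log (q' x.1 * Z / Real.exp (E x.1 + H x.1))) * p x.1 x.2
        + q' x.1 * (p x.1 x.2 * (E x.1 + H x.1 + Real.log M - Real.log Z)
            + p x.1 x.2 * Real.log (p x.1 x.2) - p x.1 x.2 * Real.log (F x)) := by
    filter_upwards [hpos] with x hx
    rcases (mul_nonneg (hq_nonneg x.1) (hp_nonneg x.1 x.2)).lt_or_eq with hqp | h0
    · have hq : 0 < q' x.1 := by
        rcases (hq_nonneg x.1).lt_or_eq with h | h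
        · exact h
        · exfalso; rw [← h, zero_mul] at hqp; exact lt_irrefl _ hqp
      have hp' : 0 < p x.1 x.2 := by
        rcases (hp_nonneg x.1 x.2).lt_or_eq with h | h
        · exact h
        · exfalso; rw [← h, mul_zero] at hqp; exact lt_irrefl _ hqp
      have hFx : 0 < F x := hx hqp
      have e1 : Real.log (q' x.1 * p x.1 x.2 * M / F x)
          = Real.log (q' x.1) + Real.log (p x.1 x.2) + Real.log M - Real.log (F x) := by
        rw [Real.log_div (by positivity) hFx.ne', Real.log_mul (by positivity) hM_pos.ne',
          Real.log_mul hq.ne' hp'.ne']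
      have e2 : Real.log (q' x.1 * Z / Real.exp (E x.1 + H x.1))
          = Real.log (q' x.1) + Real.log Z - (E x.1 + H x.1) := by
        rw [Real.log_div (by positivity) (Real.exp_pos _).ne',
          Real.log_mul hq.ne' hZ_pos.ne', Real.log_exp]
      rw [e1, e2]; ring
    · rcases mul_eq_zero.1 h0.symm with h | h
      · rw [h]; ring_nf
      · rw [h]; ring_nf
  -- C' integrable
  have hC_int : Integrable (fun x : (Fin d → ℝ) × (Fin r → ℝ) =>
      q' x.1 * (p x.1 x.2 * (E x.1 + H x.1 + Real.log M - Real.log Z)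
        + p x.1 x.2 * Real.log (p x.1 x.2) - p x.1 x.2 * Real.log (F x))) := by
    apply (hA_int.sub hB_int).congr
    filter_upwards [hdecomp] with x hx
    simp only [Pi.sub_apply]
    rw [hx]; ring
  -- integral of B
  have hB_eq : (∫ x : (Fin d → ℝ) × (Fin r → ℝ),
      (q' x.1 * Real.log (q' x.1 * Z / Real.exp (E x.1 + H x.1))) * p x.1 x.2)
      = ∫ θ, q' θ * Real.log (q' θ * Z / Real.exp (E θ + H θ)) := by
    rw [Measure.volume_eq_prod] at hB_int ⊢
    rw [integral_prod _ hB_int]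
    congr 1
    funext θ
    show (∫ s, q' θ * Real.log (q' θ * Z / Real.exp (E θ + H θ)) * p θ s) = _
    rw [integral_const_mul, hp_one θ, mul_one]
  -- integral of C'
  have hC_eq : (∫ x : (Fin d → ℝ) × (Fin r → ℝ),
      q' x.1 * (p x.1 x.2 * (E x.1 + H x.1 + Real.log M - Real.log Z)
        + p x.1 x.2 * Real.log (p x.1 x.2) - p x.1 x.2 * Real.log (F x)))
      = Real.log M - Real.log Z := by
    rw [Measure.volume_eq_prod] at hC_int ⊢
    rw [integral_prod _ hC_int]
    have hinner : ∀ θ, (∫ s, q' θ * (p θ s * (E θ + H θ + Real.log M - Real.log Z)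
        + p θ s * Real.log (p θ s) - p θ s * Real.log (F (θ, s))))
        = q' θ * (Real.log M - Real.log Z) := by
      intro θ
      show (∫ s, q' θ * (p θ s * (E θ + H θ + Real.log M - Real.log Z)
        + p θ s * Real.log (p θ s) - p θ s * Real.log (F (θ, s)))) = _
      rw [integral_const_mul]
      congr 1
      have h1 : Integrable (fun s => p θ s * (E θ + H θ + Real.log M - Real.log Z)) :=
        (hp_int θ).mul_const _
      have h12 : Integrable (fun s => p θ s * (E θ + H θ + Real.log M - Real.log Z)
          + p θ s * Real.log (p θ s)) := by exact h1.add (hH_int θ)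
      rw [integral_sub h12 (hE_int θ)]
      have h13 : (∫ s, (p θ s * (E θ + H θ + Real.log M - Real.log Z)
          + p θ s * Real.log (p θ s))) = (E θ + H θ + Real.log M - Real.log Z) + -H θ := by
        rw [integral_add h1 (hH_int θ), integral_mul_const, hp_one θ]
        have h2 : (∫ s, p θ s * Real.log (p θ s)) = -H θ := by rw [hH θ]; ring
        rw [h2, one_mul]
      rw [h13, ← hE θ]
      ring
    simp_rw [hinner]
    rw [integral_mul_const, hq_one, one_mul]
  -- main identity
  have hmain : (∫ x : (Fin d → ℝ) × (Fin r → ℝ),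
      q' x.1 * p x.1 x.2 * Real.log (q' x.1 * p x.1 x.2 * M / F x))
      = (∫ θ, q' θ * Real.log (q' θ * Z / Real.exp (E θ + H θ)))
        + (Real.log M - Real.log Z) := by
    rw [integral_congr_ae hdecomp, integral_add hB_int hC_int, hB_eq, hC_eq]
  -- Gibbs inequality
  have hf'_int : Integrable (fun θ => Real.exp (E θ + H θ) / Z) := hg_int.div_const Z
  have hf'_one : (∫ θ, Real.exp (E θ + H θ) / Z) = 1 := by
    rw [integral_div]; exact div_self hZ_pos.ne'
  have hpt : ∀ θ, (q' θ - Real.exp (E θ + H θ) / Z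
        ≤ q' θ * Real.log (q' θ * Z / Real.exp (E θ + H θ)))
      ∧ (q' θ * Real.log (q' θ * Z / Real.exp (E θ + H θ))
          = q' θ - Real.exp (E θ + H θ) / Z ↔ q' θ = Real.exp (E θ + H θ) / Z) := by
    intro θ
    have hy : 0 < Real.exp (E θ + H θ) / Z := div_pos (Real.exp_pos _) hZ_pos
    have h := gibbs_pointwise (q' θ) (Real.exp (E θ + H θ) / Z) (hq_nonneg θ) hy
    rw [div_div_eq_mul_div] at h
    exact h
  have hqf_int : Integrable (fun θ => q' θ - Real.exp (E θ + H θ) / Z) := by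
    exact hq_int.sub hf'_int
  have hqf_eq : (∫ θ, (q' θ - Real.exp (E θ + H θ) / Z)) = 0 := by
    rw [integral_sub hq_int hf'_int, hq_one, hf'_one]; ring
  have hI0 : 0 ≤ ∫ θ, q' θ * Real.log (q' θ * Z / Real.exp (E θ + H θ)) := by
    have hmono := integral_mono hqf_int hint2 (fun θ => (hpt θ).1)
    rw [hqf_eq] at hmono
    linarith
  have hiff : (∫ θ, q' θ * Real.log (q' θ * Z / Real.exp (E θ + H θ))) = 0
      ↔ q' =ᵐ[volume] fun θ => Real.exp (E θ + H θ) / Z := by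
    constructor
    · intro h
      have hψ_int : Integrable (fun θ =>
          q' θ * Real.log (q' θ * Z / Real.exp (E θ + H θ))
            - (q' θ - Real.exp (E θ + H θ) / Z)) := by exact hint2.sub hqf_int
      have hψ_nonneg : (0 : (Fin d → ℝ) → ℝ) ≤ fun θ =>
          q' θ * Real.log (q' θ * Z / Real.exp (E θ + H θ))
            - (q' θ - Real.exp (E θ + H θ) / Z) :=
        fun θ => sub_nonneg.2 (hpt θ).1
      have hψ0 : (∫ θ, (q' θ * Real.log (q' θ * Z / Real.exp (E θ + H θ))
          - (q' θ - Real.exp (E θ + H θ) / Z))) = 0 := by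
        rw [integral_sub hint2 hqf_int, h, hqf_eq]
        ring
      have hae := (integral_eq_zero_iff_of_nonneg hψ_nonneg hψ_int).1 hψ0
      filter_upwards [hae] with θ hθ
      have hθ' : q' θ * Real.log (q' θ * Z / Real.exp (E θ + H θ))
          = q' θ - Real.exp (E θ + H θ) / Z := by
        have : q' θ * Real.log (q' θ * Z / Real.exp (E θ + H θ))
            - (q' θ - Real.exp (E θ + H θ) / Z) = 0 := hθ
        linarith
      exact (hpt θ).2.1 hθ'
    · intro h
      have hzero : (fun θ => q' θ * Real.log (q' θ * Z / Real.exp (E θ + H θ)))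
          =ᵐ[volume] (fun _ => (0 : ℝ)) := by
        filter_upwards [h] with θ hθ
        rw [hθ]
        have harg : Real.exp (E θ + H θ) / Z * Z / Real.exp (E θ + H θ) = 1 := by
          field_simp
        rw [harg, Real.log_one, mul_zero]
      rw [integral_congr_ae hzero, integral_zero]
  -- finish
  have hgoal_eq : (∫ x : (Fin d → ℝ) × (Fin r → ℝ),
      q' x.1 * p x.1 x.2 * Real.log (q' x.1 * p x.1 x.2 / (F x / M)))
      = (∫ x : (Fin d → ℝ) × (Fin r → ℝ),
      q' x.1 * p x.1 x.2 * Real.log (q' x.1 * p x.1 x.2 * M / F x)) := by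
    congr 1
    funext x
    rw [div_div_eq_mul_div]
  rw [hgoal_eq, hmain]
  constructor
  · linarith
  · constructor
    · intro h
      exact hiff.1 (by linarith)
    · intro h
      have := hiff.2 h
      linarith
end

section
/- Let r, m ≥ 1, let h₁, …, h_m ∈ ℝ^r, and let λ ∈ ℝ^r satisfy 1 + ⟨λ, h_i⟩ > 0 for every i and ∑_{i=1}^m h_i / (1 + ⟨λ, h_i⟩) = 0, where ⟨·,·⟩ is the Euclidean inner product. Define w_i := 1 / ( m·(1 + ⟨λ, h_i⟩) ). Then: (i) w_i > 0 for all i, ∑_{i=1}^m w_i = 1, and ∑_{i=1}^m w_i h_i = 0, so w lies in the empirical-likelihood constraint set; and (ii) for every v ∈ Δ_{m−1} with ∑_{i=1}^m v_i h_i = 0 one has ∏_{i=1}^m v_i ≤ ∏_{i=1}^m w_i, i.e. w maximizes ∏_{i=1}^m (m·w_i) over the constraint set. (This is the Lagrangian dual representation of the optimal empirical-likelihood weights ŵ_i = {m(1+λ̂ᵀh_i)}^{−1}.) -/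
/-!
Write `t i = ⟪λ, h i⟫`. Pairing the dual equation with `λ` gives `∑ t i / (1 + t i) = 0`, and since
`1 / (1 + t) = 1 - t / (1 + t)` this forces `∑ 1 / (1 + t i) = m`, so the weights `w` sum to one.
For a feasible `v`, the ratios `v i / w i = m (1 + t i) v i` sum to `m (1 + ⟪λ, ∑ v i h i⟫) = m`,
so by AM-GM their product is at most one, i.e. `∏ v i ≤ ∏ w i`.
-/

open scoped RealInnerProductSpace

open Finset

section ScalarFacts

variable {ι : Type*} [Fintype ι]

theorem Real.prod_le_one_of_sum_eq_card {x : ι → ℝ} (hx : ∀ i, 0 ≤ x i)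
    (hsum : ∑ i, x i = Fintype.card ι) : ∏ i, x i ≤ 1 := by
  rcases isEmpty_or_nonempty ι with hι | hι
  · simp
  have hcard : (0 : ℝ) < Fintype.card ι := by exact_mod_cast Fintype.card_pos
  have amgm := Real.geom_mean_le_arith_mean univ (fun _ ↦ 1) x (fun _ _ ↦ zero_le_one)
    (by simpa using hcard) (fun i _ ↦ hx i)
  simp only [Real.rpow_one, one_mul, sum_const, card_univ, nsmul_eq_mul, mul_one, hsum,
    div_self hcard.ne'] at amgm
  simpa using (Real.rpow_inv_le_iff_of_pos (prod_nonneg fun i _ ↦ hx i) zero_le_one hcard).1 amgm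

theorem sum_inv_one_add_eq_card {t : ι → ℝ} (ht : ∀ i, 1 + t i ≠ 0)
    (hsum : ∑ i, (1 + t i)⁻¹ * t i = 0) : ∑ i, (1 + t i)⁻¹ = Fintype.card ι := by
  have hsplit : ∀ i, (1 + t i)⁻¹ = 1 - (1 + t i)⁻¹ * t i := fun i ↦ by
    field_simp [ht i]
    ring
  rw [sum_congr rfl fun i _ ↦ hsplit i, sum_sub_distrib, hsum]
  simp

theorem prod_le_prod_inv_card_mul_one_add {t v : ι → ℝ} (ht : ∀ i, 0 < 1 + t i)
    (hv : ∀ i, 0 ≤ v i) (hv_sum : ∑ i, v i = 1) (hvt : ∑ i, v i * t i = 0) :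
    ∏ i, v i ≤ ∏ i, ((Fintype.card ι : ℝ) * (1 + t i))⁻¹ := by
  have hι : Nonempty ι := by
    by_contra hempty
    simp [not_nonempty_iff.1 hempty] at hv_sum
  have hn : (0 : ℝ) < Fintype.card ι := by exact_mod_cast Fintype.card_pos
  set n : ℝ := (Fintype.card ι : ℝ)
  have hratio_sum : ∑ i, n * (1 + t i) * v i = n := by
    simp only [mul_assoc, ← mul_sum, add_mul, one_mul, sum_add_distrib, hv_sum,
      mul_comm (t _), hvt, add_zero, mul_one]
  have hratio_prod : ∏ i, n * (1 + t i) * v i ≤ 1 :=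
    Real.prod_le_one_of_sum_eq_card (fun i ↦ mul_nonneg (mul_pos hn (ht i)).le (hv i)) hratio_sum
  have hpos : 0 < ∏ i, n * (1 + t i) := prod_pos fun i _ ↦ mul_pos hn (ht i)
  rw [prod_mul_distrib] at hratio_prod
  rw [prod_inv_distrib, ← one_div, le_div_iff₀ hpos, mul_comm]
  exact hratio_prod

end ScalarFacts

theorem sum_mul_inner_eq_zero_of_sum_smul_eq_zero {ι E : Type*} [Fintype ι]
    [NormedAddCommGroup E] [InnerProductSpace ℝ E] {c : ι → ℝ} {h : ι → E}
    (hsum : ∑ i, c i • h i = 0) (l : E) : ∑ i, c i * ⟪l, h i⟫ = 0 := by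
  simpa [inner_sum, real_inner_smul_right] using congrArg (⟪l, ·⟫) hsum

theorem el_dual_weights_optimal_general (r m : ℕ) (hm : 1 ≤ m)
    (h : Fin m → EuclideanSpace ℝ (Fin r)) (l : EuclideanSpace ℝ (Fin r))
    (hpos : ∀ i, 0 < 1 + ⟪l, h i⟫)
    (hsum : ∑ i, (1 + ⟪l, h i⟫)⁻¹ • h i = 0)
    (w : Fin m → ℝ) (hw : ∀ i, w i = ((m : ℝ) * (1 + ⟪l, h i⟫))⁻¹) :
    (∀ i, 0 < w i) ∧ (∑ i, w i = 1) ∧ (∑ i, w i • h i = 0)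
    ∧ ∀ v : Fin m → ℝ, (∀ i, 0 ≤ v i) → (∑ i, v i = 1) →
        (∑ i, v i • h i = 0) → ∏ i, v i ≤ ∏ i, w i := by
  obtain rfl : w = fun i ↦ ((m : ℝ) * (1 + ⟪l, h i⟫))⁻¹ := funext hw
  have hm0 : (m : ℝ) ≠ 0 := by positivity
  have hinv_sum : ∑ i, (1 + ⟪l, h i⟫)⁻¹ = m := by
    simpa using sum_inv_one_add_eq_card (fun i ↦ (hpos i).ne')
      (sum_mul_inner_eq_zero_of_sum_smul_eq_zero hsum l)
  refine ⟨fun i ↦ by have := hpos i; positivity, ?_, ?_, ?_⟩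
  · simp only [mul_inv, ← mul_sum, hinv_sum, inv_mul_cancel₀ hm0]
  · simp only [mul_inv, ← smul_smul, ← smul_sum, hsum, smul_zero]
  · intro v hv hv_sum hvh
    simpa using prod_le_prod_inv_card_mul_one_add hpos hv hv_sum
      (sum_mul_inner_eq_zero_of_sum_smul_eq_zero hvh l)

/-- Lagrangian dual representation of the optimal empirical-likelihood weights
`ŵ_i = (m(1 + ⟪λ, h_i⟫))⁻¹`: they lie in the empirical-likelihood constraint set and maximize
`∏ v_i` over it. -/
theorem el_dual_weights_optimal (r m : ℕ) (hr : 1 ≤ r) (hm : 1 ≤ m)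
    (h : Fin m → EuclideanSpace ℝ (Fin r)) (l : EuclideanSpace ℝ (Fin r))
    (hpos : ∀ i, 0 < 1 + ⟪l, h i⟫)
    (hsum : ∑ i, (1 + ⟪l, h i⟫)⁻¹ • h i = 0)
    (w : Fin m → ℝ) (hw : ∀ i, w i = ((m : ℝ) * (1 + ⟪l, h i⟫))⁻¹) :
    (∀ i, 0 < w i) ∧ (∑ i, w i = 1) ∧ (∑ i, w i • h i = 0)
    ∧ ∀ v : Fin m → ℝ, (∀ i, 0 ≤ v i) → (∑ i, v i = 1) →
        (∑ i, v i • h i = 0) → ∏ i, v i ≤ ∏ i, w i :=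
  el_dual_weights_optimal_general r m hm h l hpos hsum w hw
end
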